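/- For each letter a and each unlabelled binary tree T with n nodes, the product P_T · P_• (where • is the one-node tree) in FQSym expands as a sum of P_{T'} over trees T' with n+1 nodes obtained by the shuffles of w_T with the single letter n+1; in particular P_T · P_• is a multiplicity-free sum of P_{T'} over an interval of trees in the Tamari/Loday-Ronco order. -/

import Mathlib

namespace Sylv

variable {α : Type*}

/-- Insert a letter into a binary search tree: left on `≤`, right on `>`. -/
def insert [LinearOrder α] (x : α) : Tree α → Tree α
  | BinaryTree.nil => Tree.node x Tree.nil Tree.nil
  | BinaryTree.node a l r =>
      if x ≤ a then Tree.node a (Sylv.insert x l) r else Tree.node a l (Sylv.insert x r)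

/-- The binary search tree `P(w)`, inserting the letters of `w` from right to left. -/
def P [LinearOrder α] (w : List α) : Tree α := w.foldr Sylv.insert Tree.nil

/-- Infix (in-order) reading of a labelled binary tree. -/
def inorder : Tree α → List α
  | BinaryTree.nil => []
  | BinaryTree.node a l r => inorder l ++ a :: inorder r

/-- Postfix (post-order) reading of a labelled binary tree. -/
def postorder : Tree α → List α
  | BinaryTree.nil => []
  | BinaryTree.node a l r => postorder l ++ postorder r ++ [a]

/-- Binary search tree property: left labels `≤` root, right labels `>` root. -/
def IsBST [LinearOrder α] : Tree α → Prop
  | BinaryTree.nil => True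
  | BinaryTree.node a l r =>
      (∀ x ∈ inorder l, x ≤ a) ∧ (∀ x ∈ inorder r, a < x) ∧ IsBST l ∧ IsBST r

/-- Shape (underlying unlabelled tree). -/
def shape : Tree α → Tree Unit
  | BinaryTree.nil => Tree.nil
  | BinaryTree.node _ l r => Tree.node () (shape l) (shape r)

/-- The sylvester congruence: the monoid congruence generated by
`z x u y ≡ x z u y` for letters `x ≤ y < z` and a word `u`. -/
inductive SylvCong [LinearOrder α] : List α → List α → Prop
  | rel (p u q : List α) (x y z : α) (hxy : x ≤ y) (hyz : y < z) :
      SylvCong (p ++ z :: x :: u ++ y :: q) (p ++ x :: z :: u ++ y :: q)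
  | refl (w : List α) : SylvCong w w
  | symm {u v} : SylvCong u v → SylvCong v u
  | trans {u v w} : SylvCong u v → SylvCong v w → SylvCong u w

/-- One rewriting step `x z u y → z x u y` (with `x ≤ y < z`), in any context. -/
inductive SylvStep [LinearOrder α] : List α → List α → Prop
  | step (p u q : List α) (x y z : α) (hxy : x ≤ y) (hyz : y < z) :
      SylvStep (p ++ x :: z :: u ++ y :: q) (p ++ z :: x :: u ++ y :: q)

/-- Standardization of a word: values in `1..n`. -/
def std [LinearOrder α] [Inhabited α] (w : List α) : List ℕ :=
  (List.range w.length).map (fun i =>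
    ((List.range w.length).filter (fun j =>
      w.getD j default < w.getD i default ∨
        (w.getD j default = w.getD i default ∧ j < i))).length + 1)

/-- Inverse of a permutation word of `1..n`. -/
def invPerm (s : List ℕ) : List ℕ :=
  (List.range s.length).map (fun j => s.idxOf (j + 1) + 1)

/-- `w` is a permutation word of `{1,…,n}`. -/
def IsPermWord (n : ℕ) (w : List ℕ) : Prop := w.Perm (List.range' 1 n)

/-- Decreasing tree: every node's label exceeds all labels in its subtrees. -/
def IsDecreasing : Tree ℕ → Prop
  | BinaryTree.nil => True
  | BinaryTree.node a l r =>
      (∀ x ∈ inorder l, x < a) ∧ (∀ x ∈ inorder r, x < a) ∧ IsDecreasing l ∧ IsDecreasing r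

/-- `t` is the decreasing tree of the word `w` (unique when letters are distinct). -/
def IsDecrTreeOf (w : List ℕ) (t : Tree ℕ) : Prop := IsDecreasing t ∧ inorder t = w

/-- Label the nodes of an unlabelled tree in infix order, starting from `k`. -/
def labelFrom : Tree Unit → ℕ → Tree ℕ × ℕ
  | BinaryTree.nil, k => (Tree.nil, k)
  | BinaryTree.node _ l r, k =>
      let p := labelFrom l k
      let q := labelFrom r (p.2 + 1)
      (Tree.node p.2 p.1 q.1, q.2)

/-- The canonical tree-word `w_T`: postfix reading of `T` labelled in infix order by `1..n`. -/
def treeWord (T : Tree Unit) : List ℕ := postorder (labelFrom T 1).1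

/-- Shift all letters of a word by `k`. -/
def shift (k : ℕ) (w : List ℕ) : List ℕ := w.map (· + k)

/-- `IsShuffle u v w` : `w` appears in the shuffle product `u ⧢ v`. -/
inductive IsShuffle : List ℕ → List ℕ → List ℕ → Prop
  | nil : IsShuffle [] [] []
  | left (a : ℕ) {u v w} : IsShuffle u v w → IsShuffle (a :: u) v (a :: w)
  | right (a : ℕ) {u v w} : IsShuffle u v w → IsShuffle u (a :: v) (a :: w)

/-- A model of the homogeneous components of `FQSym`: formal series on words,
encoded by their coefficient functions. -/
abbrev FQS := List ℕ → ℚ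

/-- Product of noncommutative series: convolution over factorizations. -/
noncomputable def mulF (f g : FQS) : FQS := fun w =>
  ∑ i ∈ Finset.range (w.length + 1), f (w.take i) * g (w.drop i)

open Classical in
/-- `F_σ = ∑_{std w = σ⁻¹} w`. -/
noncomputable def Fel (σ : List ℕ) : FQS := fun w =>
  if std w = invPerm σ then 1 else 0

open Classical in
/-- `P_T = ∑_{P(σ) = T} F_σ`. -/
noncomputable def Pel (T : Tree Unit) : FQS := fun w =>
  if ∃ σ, IsPermWord w.length σ ∧ shape (P σ) = T ∧ std w = invPerm σ then 1 else 0

/-- Inversions (by values) of a permutation word. -/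
def InvV (w : List ℕ) : Set (ℕ × ℕ) :=
  {p | p.1 < p.2 ∧ p.1 ∈ w ∧ p.2 ∈ w ∧ w.idxOf p.2 < w.idxOf p.1}

/-- Right weak order on permutation words: inclusion of inversion sets. -/
def weakLe (u v : List ℕ) : Prop := InvV u ⊆ InvV v

/-- Product of hook lengths of a binary tree. -/
def hookProd : Tree Unit → ℕ
  | BinaryTree.nil => 1
  | BinaryTree.node _ l r => (l.numNodes + r.numNodes + 1) * hookProd l * hookProd r

/-- Major index of a word: sum of descent positions (1-based). -/
def maj (w : List ℕ) : ℕ :=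
  ∑ i ∈ Finset.range (w.length - 1),
    if w.getD (i + 1) 0 < w.getD i 0 then i + 1 else 0

/-- `[n]_q` as a polynomial. -/
noncomputable def qInt (n : ℕ) : Polynomial ℚ := ∑ i ∈ Finset.range n, Polynomial.X ^ i

/-- `[n]_q!`. -/
noncomputable def qFact : ℕ → Polynomial ℚ
  | 0 => 1
  | n + 1 => qFact n * qInt (n + 1)

/-- `∏_{v ∈ T} q^{δ_v} [h_v]_q`. -/
noncomputable def qHook : Tree Unit → Polynomial ℚ
  | BinaryTree.nil => 1
  | BinaryTree.node _ l r =>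
      Polynomial.X ^ r.numNodes * qInt (l.numNodes + r.numNodes + 1) * qHook l * qHook r

end Sylv

namespace Sylv

/-! ### shuffle lemmas -/

theorem isShuffle_nil_right (u : List ℕ) : IsShuffle u [] u := by
  induction u with
  | nil => exact .nil
  | cons a u ih => exact .left a ih

theorem IsShuffle.eq_of_nil_right {u w : List ℕ} (h : IsShuffle u [] w) : u = w := by
  generalize hv : ([] : List ℕ) = v at h
  induction h with
  | nil => rfl
  | left a h ih => simp [ih hv]
  | right a h ih => simp at hv

theorem isShuffle_append_left (c : List ℕ) {u v w : List ℕ} (h : IsShuffle u v w) :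
    IsShuffle (c ++ u) v (c ++ w) := by
  induction c with
  | nil => exact h
  | cons a c ih => exact .left a ih

theorem IsShuffle.append_singleton {u v w : List ℕ} (a : ℕ) (h : IsShuffle u v w) :
    IsShuffle (u ++ [a]) v (w ++ [a]) := by
  induction h with
  | nil => exact .left a .nil
  | left b h ih => exact .left b ih
  | right b h ih => exact .right b ih

theorem isShuffle_middle (A B : List ℕ) (M : ℕ) : IsShuffle (A ++ B) [M] (A ++ M :: B) :=
  isShuffle_append_left A (.right M (isShuffle_nil_right B))

theorem IsShuffle.length {u v w : List ℕ} (h : IsShuffle u v w) :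
    w.length = u.length + v.length := by
  induction h with
  | nil => rfl
  | left b h ih => simpa [ih] using by omega
  | right b h ih => simpa [ih] using by omega

theorem IsShuffle.erase_of_single {u w : List ℕ} {M : ℕ} (h : IsShuffle u [M] w)
    (hM : M ∉ u) : w.erase M = u := by
  generalize hv : [M] = v at h
  induction h with
  | nil => simp at hv
  | left a h ih =>
      have ha : a ≠ M := by rintro rfl; exact hM (by simp)
      rw [List.erase_cons_tail (by simpa using ha)]
      rw [ih (by simpa using fun h' => hM (List.mem_cons_of_mem _ h')) hv]
  | right a h ih =>
      injection hv with h1 h2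
      subst h1; subst h2
      rw [h.eq_of_nil_right, List.erase_cons_head]

theorem isShuffle_of_erase {v : List ℕ} {M : ℕ} (hM : M ∈ v) :
    IsShuffle (v.erase M) [M] v := by
  induction v with
  | nil => simp at hM
  | cons a v ih =>
      by_cases ha : a = M
      · subst ha
        rw [List.erase_cons_head]
        exact .right a (isShuffle_nil_right v)
      · rw [List.erase_cons_tail (by simpa using ha)]
        refine .left a (ih ?_)
        rcases List.mem_cons.1 hM with h | h
        · exact absurd h.symm ha
        · exact h

/-! ### labelFrom and tree word basics -/

theorem labelFrom_snd (s : BinaryTree Unit) (k : ℕ) : (labelFrom s k).2 = k + s.numNodes := by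
  induction s generalizing k with
  | nil => simp [labelFrom]
  | node a l r ihl ihr =>
      simp only [labelFrom, BinaryTree.numNodes, ihl, ihr]
      omega

theorem inorder_labelFrom (s : BinaryTree Unit) (k : ℕ) :
    inorder (labelFrom s k).1 = List.range' k s.numNodes := by
  induction s generalizing k with
  | nil => simp [labelFrom, inorder]
  | node a l r ihl ihr =>
      simp only [labelFrom, inorder, ihl, ihr, labelFrom_snd]
      rw [show ((k + l.numNodes) :: List.range' (k + l.numNodes + 1) r.numNodes : List ℕ)
            = List.range' (k + l.numNodes) (r.numNodes + 1) from rfl]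
      rw [show List.range' (k + l.numNodes) (r.numNodes + 1)
            = List.range' (k + 1 * l.numNodes) (r.numNodes + 1) by ring_nf]
      rw [List.range'_append]
      congr 1

theorem postorder_perm_inorder (t : BinaryTree α) : (postorder t).Perm (inorder t) := by
  induction t with
  | nil => simp [postorder, inorder]
  | node a l r ihl ihr =>
      simp only [postorder, inorder]
      refine List.Perm.trans ?_ (ihl.append (ihr.cons a))
      rw [List.append_assoc]
      exact List.Perm.append_left _ (List.perm_append_singleton a _)

theorem length_postorder (t : BinaryTree α) : (postorder t).length = t.numNodes := by
  induction t with
  | nil => rfl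
  | node a l r ihl ihr => simp [postorder, ihl, ihr, BinaryTree.numNodes]; omega

theorem treeWord_perm (T : BinaryTree Unit) : (treeWord T).Perm (List.range' 1 T.numNodes) := by
  have := (postorder_perm_inorder (labelFrom T 1).1).trans
    (by rw [inorder_labelFrom])
  exact this

theorem treeWord_nodup (T : BinaryTree Unit) : (treeWord T).Nodup :=
  (treeWord_perm T).nodup_iff.2 (List.nodup_range')

theorem mem_treeWord {T : BinaryTree Unit} {x : ℕ} : x ∈ treeWord T ↔ 1 ≤ x ∧ x < 1 + T.numNodes := by
  rw [(treeWord_perm T).mem_iff, List.mem_range']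
  constructor
  · rintro ⟨i, hi, rfl⟩; omega
  · rintro ⟨h1, h2⟩; exact ⟨x - 1, by omega, by omega⟩

theorem length_treeWord (T : BinaryTree Unit) : (treeWord T).length = T.numNodes := by
  simpa using (treeWord_perm T).length_eq

theorem shape_labelFrom (s : BinaryTree Unit) (k : ℕ) : shape (labelFrom s k).1 = s := by
  induction s generalizing k with
  | nil => simp [labelFrom, shape]
  | node a l r ihl ihr =>
      simp only [labelFrom, shape, ihl, ihr]

/-- strict BST property -/
def SBST : BinaryTree ℕ → Prop
  | BinaryTree.nil => True
  | BinaryTree.node a l r =>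
      (∀ x ∈ inorder l, x < a) ∧ (∀ x ∈ inorder r, a < x) ∧ SBST l ∧ SBST r

theorem sbst_labelFrom (s : BinaryTree Unit) (k : ℕ) : SBST (labelFrom s k).1 := by
  induction s generalizing k with
  | nil => trivial
  | node a l r ihl ihr =>
      refine ⟨?_, ?_, ihl k, ihr _⟩
      · intro x hx
        rw [inorder_labelFrom] at hx
        have := List.mem_range'.1 hx
        rw [labelFrom_snd]; omega
      · intro x hx
        rw [inorder_labelFrom] at hx
        have := List.mem_range'.1 hx
        rw [labelFrom_snd] at *; omega

theorem foldr_insert_gt {L : List ℕ} {a : ℕ} (h : ∀ x ∈ L, a < x) (l t : BinaryTree ℕ) :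
    L.foldr Sylv.insert (BinaryTree.node a l t) = BinaryTree.node a l (L.foldr Sylv.insert t) := by
  induction L with
  | nil => rfl
  | cons x L ih =>
      have hx : a < x := h x (by simp)
      simp only [List.foldr_cons, ih (fun y hy => h y (by simp [hy]))]
      rw [Sylv.insert, if_neg (by omega)]

theorem foldr_insert_le {L : List ℕ} {a : ℕ} (h : ∀ x ∈ L, x ≤ a) (l t : BinaryTree ℕ) :
    L.foldr Sylv.insert (BinaryTree.node a l t) = BinaryTree.node a (L.foldr Sylv.insert l) t := by
  induction L with
  | nil => rfl
  | cons x L ih =>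
      have hx : x ≤ a := h x (by simp)
      simp only [List.foldr_cons, ih (fun y hy => h y (by simp [hy]))]
      rw [Sylv.insert, if_pos hx]

theorem P_postorder {t : BinaryTree ℕ} (h : SBST t) : P (postorder t) = t := by
  induction t with
  | nil => rfl
  | node a l r ihl ihr =>
      obtain ⟨hl, hr, hbl, hbr⟩ := h
      have hpl : ∀ x ∈ postorder l, x ≤ a := fun x hx =>
        le_of_lt (hl x ((postorder_perm_inorder l).mem_iff.1 hx))
      have hpr : ∀ x ∈ postorder r, a < x := fun x hx =>
        hr x ((postorder_perm_inorder r).mem_iff.1 hx)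
      simp only [postorder, P, List.foldr_append]
      show (postorder l).foldr Sylv.insert
        ((postorder r).foldr Sylv.insert (Sylv.insert a BinaryTree.nil)) = _
      rw [show Sylv.insert a BinaryTree.nil = BinaryTree.node a BinaryTree.nil BinaryTree.nil from rfl]
      rw [foldr_insert_gt hpr, foldr_insert_le hpl]
      exact congrArg₂ (BinaryTree.node a) (ihl hbl) (ihr hbr)

theorem treeWord_injective : Function.Injective treeWord := by
  intro T T' h
  have h2 : (labelFrom T 1).1 = (labelFrom T' 1).1 := by
    rw [← P_postorder (sbst_labelFrom T 1), ← P_postorder (sbst_labelFrom T' 1)]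
    exact congrArg P h
  rw [← shape_labelFrom T 1, ← shape_labelFrom T' 1, h2]
/-! ### right-spine grafting -/

inductive SRel : BinaryTree Unit → BinaryTree Unit → Prop
  | top (s : BinaryTree Unit) : SRel s (BinaryTree.node () s BinaryTree.nil)
  | deep {r' r : BinaryTree Unit} (l : BinaryTree Unit) : SRel r' r → SRel (BinaryTree.node () l r') (BinaryTree.node () l r)

def delRight : BinaryTree Unit → BinaryTree Unit
  | BinaryTree.nil => BinaryTree.nil
  | BinaryTree.node _ l BinaryTree.nil => l
  | BinaryTree.node _ l (BinaryTree.node b rl rr) => BinaryTree.node () l (delRight (BinaryTree.node b rl rr))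

def attachRight : BinaryTree Unit → BinaryTree Unit
  | BinaryTree.nil => BinaryTree.node () BinaryTree.nil BinaryTree.nil
  | BinaryTree.node _ l r => BinaryTree.node () l (attachRight r)

def rightSpineLen : BinaryTree Unit → ℕ
  | BinaryTree.nil => 0
  | BinaryTree.node _ _ r => rightSpineLen r + 1

def graftList : BinaryTree Unit → List (BinaryTree Unit)
  | BinaryTree.nil => [BinaryTree.node () BinaryTree.nil BinaryTree.nil]
  | BinaryTree.node a l r => BinaryTree.node () (BinaryTree.node a l r) BinaryTree.nil ::
      (graftList r).map (BinaryTree.node () l ·)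

theorem numNodes_labelFrom (s : BinaryTree Unit) (k : ℕ) : BinaryTree.numNodes (labelFrom s k).1 = s.numNodes := by
  induction s generalizing k with
  | nil => rfl
  | node a l r ihl ihr => simp only [labelFrom, BinaryTree.numNodes, ihl, ihr]

theorem length_postorder_labelFrom (s : BinaryTree Unit) (k : ℕ) :
    (postorder (labelFrom s k).1).length = s.numNodes := by
  rw [length_postorder, numNodes_labelFrom]

theorem take_drop_insert (A B : List ℕ) (c M d : ℕ) (hd : d ≤ B.length) :
    A ++ (B.take d ++ M :: B.drop d) ++ [c] =
      ((A ++ B ++ [c]).take (A.length + d)) ++ M :: ((A ++ B ++ [c]).drop (A.length + d)) := by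
  rw [List.append_assoc A B, List.take_append, List.drop_append]
  rw [List.take_of_length_le (by omega : A.length ≤ A.length + d),
    List.drop_eq_nil_of_le (by omega : A.length ≤ A.length + d)]
  rw [Nat.add_sub_cancel_left]
  rw [List.take_append_of_le_length hd, List.drop_append_of_le_length hd]
  simp [List.append_assoc]

theorem rightSpineLen_le (s : BinaryTree Unit) : rightSpineLen s ≤ s.numNodes := by
  induction s with
  | nil => exact le_refl 0
  | node a l r ihl ihr => simp only [rightSpineLen, BinaryTree.numNodes]; omega

theorem SRel.delRight_eq {s t : BinaryTree Unit} (h : SRel s t) : delRight t = s := by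
  induction h with
  | top s => rfl
  | deep l h ih =>
      rename_i r' r
      cases r with
      | nil => cases h
      | node b rl rr => rw [delRight, ih]

theorem srel_delRight {t : BinaryTree Unit} (h : t ≠ BinaryTree.nil) : SRel (delRight t) t := by
  induction t with
  | nil => exact absurd rfl h
  | node a l r ihl ihr =>
      cases r with
      | nil => cases a; exact .top l
      | node b rl rr =>
          cases a
          exact .deep l (by simpa [delRight] using ihr (by simp))

theorem srel_attachRight (s : BinaryTree Unit) : SRel s (attachRight s) := by
  induction s with
  | nil => exact .top BinaryTree.nil
  | node a l r ihl ihr => cases a; exact .deep l ihr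

theorem mem_graftList {s t : BinaryTree Unit} : t ∈ graftList s ↔ SRel s t := by
  constructor
  · intro h
    induction s generalizing t with
    | nil => simp [graftList] at h; subst h; exact .top _
    | node a l r ihl ihr =>
        cases a
        simp only [graftList, List.mem_cons, List.mem_map] at h
        rcases h with rfl | ⟨t', ht', rfl⟩
        · exact .top _
        · exact .deep l (ihr ht')
  · intro h
    induction h with
    | top s => cases s <;> simp [graftList]
    | deep l h ih =>
        rename_i r' r
        simp only [graftList, List.mem_cons, List.mem_map]
        exact Or.inr ⟨r, ih, rfl⟩

theorem SRel.numNodes {s t : BinaryTree Unit} (h : SRel s t) : t.numNodes = s.numNodes + 1 := by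
  induction h with
  | top s => simp [BinaryTree.numNodes]
  | deep l h ih => simp [BinaryTree.numNodes, ih]; omega

theorem SRel.ne_nil {s t : BinaryTree Unit} (h : SRel s t) : t ≠ BinaryTree.nil := by
  cases h <;> simp

/-- Master lemma: the tree word of a graft is the base word with `k + numNodes`
inserted at a position `numNodes - j` with `j ≤ rightSpineLen`. -/
theorem srel_word {s t : BinaryTree Unit} (h : SRel s t) (k : ℕ) :
    ∃ j, j ≤ rightSpineLen s ∧
      postorder (labelFrom t k).1 =
        (postorder (labelFrom s k).1).take (s.numNodes - j) ++
          (k + s.numNodes) :: (postorder (labelFrom s k).1).drop (s.numNodes - j) := by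
  induction h generalizing k with
  | top s =>
      refine ⟨0, Nat.zero_le _, ?_⟩
      have hlen := length_postorder_labelFrom s k
      simp only [labelFrom, postorder, labelFrom_snd]
      rw [Nat.sub_zero, List.take_of_length_le hlen.le, List.drop_eq_nil_of_le hlen.le]
      simp
  | deep l h ih =>
      rename_i r' r
      obtain ⟨j, hj, hw⟩ := ih ((labelFrom l k).2 + 1)
      refine ⟨j + 1, by simp [rightSpineLen]; omega, ?_⟩
      have hlenl := length_postorder_labelFrom l k
      have hjn : j ≤ r'.numNodes := le_trans hj (rightSpineLen_le r')
      have hnn : (BinaryTree.node () l r').numNodes - (j+1) = l.numNodes + (r'.numNodes - j) := by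
        simp [BinaryTree.numNodes]; omega
      simp only [labelFrom, postorder, labelFrom_snd]
      rw [labelFrom_snd] at hw
      rw [hw]
      rw [show k + l.numNodes + 1 + r'.numNodes = k + (BinaryTree.node () l r').numNodes by
        simp [BinaryTree.numNodes]; omega]
      rw [hnn, ← hlenl]
      exact take_drop_insert _ _ _ _ _ (by rw [length_postorder_labelFrom]; omega)
/-! ### explicit words of grafts -/

theorem word_top (T : BinaryTree Unit) :
    treeWord (BinaryTree.node () T BinaryTree.nil) = treeWord T ++ [1 + T.numNodes] := by
  simp [treeWord, labelFrom, postorder, labelFrom_snd]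

theorem attachRight_word (s : BinaryTree Unit) (k : ℕ) :
    postorder (labelFrom (attachRight s) k).1 =
      (postorder (labelFrom s k).1).take (s.numNodes - rightSpineLen s) ++
        (k + s.numNodes) :: (postorder (labelFrom s k).1).drop (s.numNodes - rightSpineLen s) := by
  induction s generalizing k with
  | nil => simp [attachRight, labelFrom, postorder, rightSpineLen]
  | node a l r ihl ihr =>
      have hrs := rightSpineLen_le r
      have hnn : (BinaryTree.node a l r).numNodes - rightSpineLen (BinaryTree.node a l r)
          = l.numNodes + (r.numNodes - rightSpineLen r) := by
        simp [BinaryTree.numNodes, rightSpineLen]; omega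
      simp only [attachRight, labelFrom, postorder, labelFrom_snd]
      rw [ihr, hnn]
      rw [show k + l.numNodes + 1 + r.numNodes = k + (BinaryTree.node a l r).numNodes by
        simp [BinaryTree.numNodes]; omega]
      rw [← length_postorder_labelFrom l k]
      exact take_drop_insert _ _ _ _ _ (by rw [length_postorder_labelFrom]; omega)

/-! ### inserting a maximal letter and BST shapes -/

inductive Rel (M : ℕ) : BinaryTree ℕ → BinaryTree ℕ → Prop
  | top (t : BinaryTree ℕ) : Rel M t (BinaryTree.node M t BinaryTree.nil)
  | deep {r' r : BinaryTree ℕ} (a : ℕ) (l : BinaryTree ℕ) : Rel M r' r → Rel M (BinaryTree.node a l r') (BinaryTree.node a l r)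

theorem Rel.srel_shape {M : ℕ} {t t' : BinaryTree ℕ} (h : Rel M t t') : SRel (shape t) (shape t') := by
  induction h with
  | top t => exact .top _
  | deep a l h ih => exact .deep _ ih

theorem mem_inorder_insert {y x : ℕ} {t : BinaryTree ℕ} (h : y ∈ inorder (Sylv.insert x t)) :
    y = x ∨ y ∈ inorder t := by
  induction t with
  | nil => simp [Sylv.insert, inorder] at h; simp [h]
  | node a l r ihl ihr =>
      rw [Sylv.insert] at h
      by_cases hc : x ≤ a
      · rw [if_pos hc] at h
        simp only [inorder, List.mem_append, List.mem_cons] at h ⊢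
        rcases h with h | h
        · rcases ihl h with h' | h'
          · exact Or.inl h'
          · exact Or.inr (Or.inl h')
        · exact Or.inr (Or.inr h)
      · rw [if_neg hc] at h
        simp only [inorder, List.mem_append, List.mem_cons] at h ⊢
        rcases h with h | h | h
        · exact Or.inr (Or.inl h)
        · exact Or.inr (Or.inr (Or.inl h))
        · rcases ihr h with h' | h'
          · exact Or.inl h'
          · exact Or.inr (Or.inr (Or.inr h'))

theorem mem_inorder_P {y : ℕ} {L : List ℕ} (h : y ∈ inorder (P L)) : y ∈ L := by
  induction L with
  | nil => simp [P, inorder] at h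
  | cons x L ih =>
      rcases mem_inorder_insert (t := P L) (by simpa [P] using h) with h' | h'
      · simp [h']
      · exact List.mem_cons_of_mem _ (ih h')

theorem rel_insert_max {M : ℕ} {t : BinaryTree ℕ} (h : ∀ y ∈ inorder t, y < M) :
    Rel M t (Sylv.insert M t) := by
  induction t with
  | nil => exact .top _
  | node a l r ihl ihr =>
      have ha : a < M := h a (by simp [inorder])
      rw [Sylv.insert, if_neg (by omega)]
      exact .deep a l (ihr fun y hy => h y (by simp [inorder, hy]))

theorem Rel.insert {M x : ℕ} (hx : x < M) {t t' : BinaryTree ℕ} (h : Rel M t t') :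
    Rel M (Sylv.insert x t) (Sylv.insert x t') := by
  induction h with
  | top t =>
      rw [Sylv.insert, if_pos (le_of_lt hx)]
      exact .top _
  | deep a l h ih =>
      by_cases hc : x ≤ a
      · rw [Sylv.insert, Sylv.insert, if_pos hc, if_pos hc]
        exact .deep a _ h
      · rw [Sylv.insert, Sylv.insert, if_neg hc, if_neg hc]
        exact .deep a l ih

theorem rel_P {M : ℕ} (A B : List ℕ) (hA : ∀ x ∈ A, x < M) (hB : ∀ x ∈ B, x < M) :
    Rel M (P (A ++ B)) (P (A ++ M :: B)) := by
  have hPB : Rel M (P B) (Sylv.insert M (P B)) :=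
    rel_insert_max fun y hy => hB y (mem_inorder_P hy)
  rw [P, P, List.foldr_append, List.foldr_append]
  show Rel M (A.foldr Sylv.insert (P B)) (A.foldr Sylv.insert (Sylv.insert M (P B)))
  induction A with
  | nil => exact hPB
  | cons x A ih =>
      exact Rel.insert (hA x (by simp)) (ih fun y hy => hA y (by simp [hy]))
theorem perm_range'_of {l : List ℕ} {n : ℕ} (hlen : l.length = n) (hnodup : l.Nodup)
    (hmem : ∀ x ∈ l, 1 ≤ x ∧ x ≤ n) : IsPermWord n l := by
  refine List.perm_of_nodup_nodup_toFinset_eq hnodup (List.nodup_range') ?_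
  refine Finset.eq_of_subset_of_card_le ?_ ?_
  · intro x hx
    rw [List.mem_toFinset] at hx
    rw [List.mem_toFinset, List.mem_range']
    have := hmem x hx
    exact ⟨x - 1, by omega, by omega⟩
  · rw [List.toFinset_card_of_nodup hnodup, List.toFinset_card_of_nodup (List.nodup_range'),
      List.length_range', hlen]

theorem IsPermWord.length {n : ℕ} {l : List ℕ} (h : IsPermWord n l) : l.length = n := by
  simpa using h.length_eq

theorem IsPermWord.nodup {n : ℕ} {l : List ℕ} (h : IsPermWord n l) : l.Nodup :=
  h.nodup_iff.2 (List.nodup_range')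

theorem IsPermWord.mem_iff' {n : ℕ} {l : List ℕ} (h : IsPermWord n l) {x : ℕ} :
    x ∈ l ↔ 1 ≤ x ∧ x ≤ n := by
  rw [List.Perm.mem_iff h, List.mem_range']
  constructor
  · rintro ⟨i, hi, rfl⟩; omega
  · rintro ⟨h1, h2⟩; exact ⟨x - 1, by omega, by omega⟩

theorem invPerm_isPermWord {n : ℕ} {s : List ℕ} (h : IsPermWord n s) :
    IsPermWord n (invPerm s) := by
  have hlen : s.length = n := h.length
  refine perm_range'_of (by simp [invPerm, hlen]) ?_ ?_
  · refine List.Nodup.map_on ?_ List.nodup_range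
    intro i hi j hj hij
    rw [List.mem_range, hlen] at hi hj
    have hi' : i + 1 ∈ s := h.mem_iff'.2 ⟨by omega, by omega⟩
    have hj' : j + 1 ∈ s := h.mem_iff'.2 ⟨by omega, by omega⟩
    have e1 := List.getElem_idxOf (List.idxOf_lt_length_iff.2 hi')
    have e2 := List.getElem_idxOf (List.idxOf_lt_length_iff.2 hj')
    have hidx : s.idxOf (i+1) = s.idxOf (j+1) := by omega
    simp only [hidx] at e1
    have := e1.symm.trans e2
    omega
  · intro x hx
    simp only [invPerm, List.mem_map, List.mem_range] at hx
    obtain ⟨j, hj, rfl⟩ := hx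
    rw [hlen] at hj
    have hj' : j + 1 ∈ s := h.mem_iff'.2 ⟨by omega, by omega⟩
    have := List.idxOf_lt_length_iff.2 hj'
    omega
theorem invPerm_length (s : List ℕ) : (invPerm s).length = s.length := by simp [invPerm]

theorem invPerm_getElem (s : List ℕ) (j : ℕ) (h : j < (invPerm s).length) :
    (invPerm s)[j] = s.idxOf (j + 1) + 1 := by
  simp [invPerm]

theorem invPerm_invPerm {n : ℕ} {s : List ℕ} (h : IsPermWord n s) :
    invPerm (invPerm s) = s := by
  have hlen : s.length = n := h.length
  have hlen2 : (invPerm s).length = n := (invPerm_isPermWord h).length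
  apply List.ext_getElem (by rw [invPerm_length, hlen2, hlen])
  intro j h1 h2
  rw [invPerm_getElem _ j h1]
  have hs1 : 1 ≤ s[j] ∧ s[j] ≤ n := h.mem_iff'.1 (List.getElem_mem h2)
  have hkey : (invPerm s)[s[j] - 1]'(by omega) = j + 1 := by
    rw [invPerm_getElem _ _ (by omega)]
    rw [show s[j] - 1 + 1 = s[j] by omega, h.nodup.idxOf_getElem j h2]
  have hfin := (invPerm_isPermWord h).nodup.idxOf_getElem (s[j] - 1) (by omega)
  rw [hkey] at hfin
  omega

theorem invPerm_inj {n : ℕ} {s : List ℕ} (h : IsPermWord n s) {w : List ℕ}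
    (hw : w = invPerm s) : s = invPerm w := by
  rw [hw, invPerm_invPerm h]

/-! ### standardization via sorting indices -/

def rIdx (w : List ℕ) (i j : ℕ) : Prop :=
  w.getD i default < w.getD j default ∨ (w.getD i default = w.getD j default ∧ i ≤ j)

instance rIdx_dec (w : List ℕ) : DecidableRel (rIdx w) := fun _ _ => by
  unfold rIdx; infer_instance

theorem rIdx_total (w : List ℕ) : IsTotal ℕ (rIdx w) :=
  ⟨fun i j => by unfold rIdx; omega⟩

theorem rIdx_trans (w : List ℕ) : IsTrans ℕ (rIdx w) :=
  ⟨fun i j k h1 h2 => by unfold rIdx at *; omega⟩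

theorem rIdx_antisymm (w : List ℕ) : IsAntisymm ℕ (rIdx w) :=
  ⟨fun i j h1 h2 => by unfold rIdx at *; omega⟩

def sIdx (w : List ℕ) : List ℕ := List.insertionSort (rIdx w) (List.range w.length)

theorem sIdx_perm (w : List ℕ) : (sIdx w).Perm (List.range w.length) :=
  List.perm_insertionSort _ _

theorem sIdx_sorted (w : List ℕ) : List.Pairwise (rIdx w) (sIdx w) :=
  haveI := rIdx_total w; haveI := rIdx_trans w
  List.pairwise_insertionSort _ _

theorem sIdx_nodup (w : List ℕ) : (sIdx w).Nodup :=
  (sIdx_perm w).nodup_iff.2 List.nodup_range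

/-- In a sorted nodup list, the index of an element counts the strictly-smaller elements. -/
theorem sorted_idxOf_eq_countP {r : ℕ → ℕ → Prop} [DecidableRel r]
    (hanti : ∀ {a b}, r a b → r b a → a = b) (hrefl : ∀ a, r a a)
    {L : List ℕ} (hs : List.Pairwise r L) (hn : L.Nodup) {i : ℕ} (hi : i ∈ L) :
    L.idxOf i = L.countP (fun j => !(decide (r i j))) := by
  induction L with
  | nil => simp at hi
  | cons x L ih =>
      rcases List.mem_cons.1 hi with rfl | hi'
      · rw [List.idxOf_cons_self]
        symm
        rw [List.countP_eq_zero]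
        intro a ha
        rcases List.mem_cons.1 ha with rfl | ha'
        · simp [hrefl]
        · simp [List.rel_of_pairwise_cons hs ha']
      · have hxi : x ≠ i := fun e => (List.nodup_cons.1 hn).1 (e ▸ hi')
        rw [List.idxOf_cons_ne _ (by simpa using hxi), List.countP_cons]
        have hrxi : r x i := List.rel_of_pairwise_cons hs hi'
        have : ¬ r i x := fun h' => hxi (hanti hrxi h')
        rw [ih (List.pairwise_cons.1 hs).2 (List.nodup_cons.1 hn).2 hi']
        simp [this]
theorem idxOf_map_add_one (l : List ℕ) (a : ℕ) :
    (l.map (· + 1)).idxOf (a + 1) = l.idxOf a := by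
  induction l with
  | nil => rfl
  | cons x l ih =>
      by_cases h : x = a
      · subst h; simp
      · rw [List.map_cons, List.idxOf_cons_ne _ (by simpa using h),
          List.idxOf_cons_ne _ (by simpa using (by omega : x + 1 ≠ a + 1)), ih]

theorem sIdx_map_isPermWord (w : List ℕ) : IsPermWord w.length ((sIdx w).map (· + 1)) := by
  have h1 : ((sIdx w).map (· + 1)).Perm ((List.range w.length).map (· + 1)) :=
    (sIdx_perm w).map _
  have h2 : (List.range w.length).map (· + 1) = List.range' 1 w.length := by
    rw [List.range'_eq_map_range]
    exact List.map_congr_left (fun x _ => by omega)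
  rw [IsPermWord, ← h2]
  exact h1

theorem std_eq (w : List ℕ) : std w = invPerm ((sIdx w).map (· + 1)) := by
  have hm : (sIdx w).length = w.length := by simpa using (sIdx_perm w).length_eq
  apply List.ext_getElem (by simp [std, invPerm, hm])
  intro i h1 h2
  have hi : i < w.length := by simpa [std] using h1
  rw [invPerm_getElem _ i h2, idxOf_map_add_one]
  simp only [std, List.getElem_map, List.getElem_range]
  congr 1
  rw [sorted_idxOf_eq_countP (fun h1 h2 => (rIdx_antisymm w).antisymm _ _ h1 h2)
      (fun a => Or.inr ⟨rfl, le_refl a⟩) (sIdx_sorted w) (sIdx_nodup w)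
      ((sIdx_perm w).mem_iff.2 (List.mem_range.2 hi))]
  rw [(sIdx_perm w).countP_eq]
  rw [← List.countP_eq_length_filter]
  apply List.countP_congr
  intro j hj
  have hj' : j < w.length := List.mem_range.1 hj
  simp only [decide_eq_true_eq, Bool.not_eq_true', decide_eq_false_iff_not]
  unfold rIdx
  omega

theorem std_isPermWord (w : List ℕ) : IsPermWord w.length (std w) := by
  rw [std_eq]; exact invPerm_isPermWord (sIdx_map_isPermWord w)

theorem invPerm_std (w : List ℕ) : invPerm (std w) = (sIdx w).map (· + 1) := by
  rw [std_eq, invPerm_invPerm (sIdx_map_isPermWord w)]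

theorem invPerm_std_isPermWord (w : List ℕ) : IsPermWord w.length (invPerm (std w)) :=
  invPerm_isPermWord (std_isPermWord w)

theorem getD_take {w : List ℕ} {k i : ℕ} {d : ℕ} (h : i < k) :
    (w.take k).getD i d = w.getD i d := by
  simp [List.getD_eq_getElem?_getD, List.getElem?_take, h]

theorem rIdx_take {w : List ℕ} {k i j : ℕ} (hi : i < k) (hj : j < k) :
    rIdx (w.take k) i j ↔ rIdx w i j := by
  unfold rIdx; rw [getD_take hi, getD_take hj]

theorem sIdx_take (w : List ℕ) (hm : 1 ≤ w.length) :
    sIdx (w.take (w.length - 1)) = (sIdx w).erase (w.length - 1) := by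
  have hul : (w.take (w.length - 1)).length = w.length - 1 := by
    rw [List.length_take]; omega
  haveI := rIdx_antisymm w
  apply (fun hp h1 h2 => List.Perm.eq_of_pairwise' (r := rIdx w) h1 h2 hp)
  · refine ((sIdx_perm _).trans ?_).trans ((sIdx_perm w).erase (w.length - 1)).symm
    rw [hul]
    have h1 : (List.range w.length).erase (w.length - 1) = List.range (w.length - 1) := by
      rw [show w.length = (w.length - 1) + 1 by omega, List.range_succ,
        List.erase_append_right _ (by simp)]
      simp
    rw [← h1]
  · refine List.Pairwise.imp_of_mem ?_ (sIdx_sorted _)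
    intro a b ha hb hab
    have ha' : a < w.length - 1 := by
      have := (sIdx_perm _).mem_iff.1 ha
      rw [List.mem_range, hul] at this
      exact this
    have hb' : b < w.length - 1 := by
      have := (sIdx_perm _).mem_iff.1 hb
      rw [List.mem_range, hul] at this
      exact this
    exact (rIdx_take ha' hb').1 hab
  · exact List.Pairwise.sublist List.erase_sublist (sIdx_sorted w)

theorem invPerm_std_take (w : List ℕ) (h : 1 ≤ w.length) :
    invPerm (std (w.take (w.length - 1))) = (invPerm (std w)).erase w.length := by
  rw [invPerm_std, invPerm_std, sIdx_take w h,
    List.map_erase (add_left_injective 1)]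
  congr 1
  omega
/-! ### inversions -/

theorem mem_take_iff_idxOf_lt {u : List ℕ} {x d : ℕ} (hx : x ∈ u) :
    x ∈ u.take d ↔ u.idxOf x < d := by
  constructor
  · intro h
    have h1 : u.idxOf x = (u.take d).idxOf x := by
      conv_lhs => rw [← List.take_append_drop d u]
      rw [List.idxOf_append_of_mem h]
    rw [h1]
    calc (u.take d).idxOf x < (u.take d).length := List.idxOf_lt_length_iff.2 h
      _ ≤ d := by rw [List.length_take]; omega
  · intro h
    by_contra hc
    have h1 : u.idxOf x = (u.take d).length + (u.drop d).idxOf x := by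
      conv_lhs => rw [← List.take_append_drop d u]
      rw [List.idxOf_append_of_notMem hc]
    have h2 : d ≤ u.length := by
      by_contra hd
      push_neg at hd
      exact hc (by rwa [List.take_of_length_le (le_of_lt hd)])
    rw [List.length_take] at h1
    omega

theorem mem_drop_iff_idxOf_ge {u : List ℕ} {x d : ℕ} (hnd : u.Nodup) (hx : x ∈ u) :
    x ∈ u.drop d ↔ d ≤ u.idxOf x := by
  have hsplit := List.take_append_drop d u
  have hmem : x ∈ u.take d ∨ x ∈ u.drop d := by
    rw [← List.mem_append, hsplit]; exact hx
  have hdisj : ∀ y, y ∈ u.take d → y ∈ u.drop d → False := by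
    intro y h1 h2
    have := hnd
    rw [← hsplit, List.nodup_append] at this
    exact this.2.2 y h1 y h2 rfl
  constructor
  · intro h
    by_contra hc
    push_neg at hc
    exact hdisj x ((mem_take_iff_idxOf_lt hx).2 hc) h
  · intro h
    rcases hmem with h1 | h1
    · have := (mem_take_iff_idxOf_lt hx).1 h1; omega
    · exact h1

theorem idxOf_insert_self {u : List ℕ} {M d : ℕ} (hd : d ≤ u.length) (hM : M ∉ u) :
    (u.take d ++ M :: u.drop d).idxOf M = d := by
  rw [List.idxOf_append_of_notMem (fun h => hM (List.mem_of_mem_take h)),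
    List.idxOf_cons_self, List.length_take]
  omega

theorem idxOf_insert_of_ne {u : List ℕ} {M x d : ℕ} (hd : d ≤ u.length) (hx : x ∈ u)
    (hxM : x ≠ M) :
    (u.take d ++ M :: u.drop d).idxOf x =
      if u.idxOf x < d then u.idxOf x else u.idxOf x + 1 := by
  by_cases h : x ∈ u.take d
  · rw [if_pos ((mem_take_iff_idxOf_lt hx).1 h), List.idxOf_append_of_mem h]
    conv_rhs => rw [← List.take_append_drop d u]
    rw [List.idxOf_append_of_mem h]
  · have hge : ¬ u.idxOf x < d := fun hc => h ((mem_take_iff_idxOf_lt hx).2 hc)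
    rw [if_neg hge, List.idxOf_append_of_notMem h,
      List.idxOf_cons_ne _ (by simpa using fun e => hxM e.symm)]
    conv_rhs => rw [← List.take_append_drop d u]
    rw [List.idxOf_append_of_notMem h, List.length_take]
    omega

theorem invV_insert {u : List ℕ} {M d : ℕ} (hnd : u.Nodup) (hM : M ∉ u)
    (hub : ∀ x ∈ u, x < M) (hd : d ≤ u.length) :
    InvV (u.take d ++ M :: u.drop d) =
      InvV u ∪ {p | p.2 = M ∧ p.1 ∈ u.drop d} := by
  ext ⟨x, y⟩
  simp only [InvV, Set.mem_setOf_eq, Set.mem_union]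
  have hmemv : ∀ z, z ∈ u.take d ++ M :: u.drop d ↔ z ∈ u ∨ z = M := by
    intro z
    simp only [List.mem_append, List.mem_cons]
    constructor
    · rintro (h | h | h)
      · exact Or.inl (List.mem_of_mem_take h)
      · exact Or.inr h
      · exact Or.inl (List.mem_of_mem_drop h)
    · rintro (h | h)
      · rcases List.mem_append.1 (by rw [List.take_append_drop]; exact h :
          z ∈ u.take d ++ u.drop d) with h' | h'
        · exact Or.inl h'
        · exact Or.inr (Or.inr h')
      · exact Or.inr (Or.inl h)
  by_cases hyM : y = M
  · subst y
    by_cases hxM : x = M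
    · subst x
      constructor
      · rintro ⟨h1, -⟩; exact absurd h1 (lt_irrefl M)
      · rintro (⟨h1, -⟩ | ⟨-, h2⟩)
        · exact absurd h1 (lt_irrefl M)
        · exact absurd (List.mem_of_mem_drop h2) hM
    · constructor
      · rintro ⟨h1, h2, h3, h4⟩
        have hxu : x ∈ u := by rcases (hmemv x).1 h2 with h | h; exact h; exact absurd h hxM
        rw [idxOf_insert_self hd hM, idxOf_insert_of_ne hd hxu hxM] at h4
        refine Or.inr ⟨rfl, ?_⟩
        rw [mem_drop_iff_idxOf_ge hnd hxu]
        by_cases hc : u.idxOf x < d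
        · rw [if_pos hc] at h4; omega
        · omega
      · rintro (⟨h1, h2, h3, h4⟩ | ⟨-, h2⟩)
        · exact absurd h3 hM
        · have hxu : x ∈ u := List.mem_of_mem_drop h2
          have hxlt : x < M := hub x hxu
          have hge : d ≤ u.idxOf x := (mem_drop_iff_idxOf_ge hnd hxu).1 h2
          refine ⟨hxlt, (hmemv x).2 (Or.inl hxu), (hmemv M).2 (Or.inr rfl), ?_⟩
          rw [idxOf_insert_self hd hM, idxOf_insert_of_ne hd hxu (by omega)]
          rw [if_neg (by omega)]
          omega
  · by_cases hxM : x = M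
    · subst x
      constructor
      · rintro ⟨h1, h2, h3, h4⟩
        have hyu : y ∈ u := by rcases (hmemv y).1 h3 with h | h; exact h; exact absurd h hyM
        exact absurd h1 (by have := hub y hyu; omega)
      · rintro (⟨h1, h2, h3, h4⟩ | ⟨h1, h2⟩)
        · exact absurd h2 hM
        · exact absurd h1 hyM
    · constructor
      · rintro ⟨h1, h2, h3, h4⟩
        have hxu : x ∈ u := by rcases (hmemv x).1 h2 with h | h; exact h; exact absurd h hxM
        have hyu : y ∈ u := by rcases (hmemv y).1 h3 with h | h; exact h; exact absurd h hyM
        rw [idxOf_insert_of_ne hd hxu hxM, idxOf_insert_of_ne hd hyu hyM] at h4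
        refine Or.inl ⟨h1, hxu, hyu, ?_⟩
        by_cases hc1 : u.idxOf x < d <;> by_cases hc2 : u.idxOf y < d <;>
          simp [hc1, hc2] at h4 <;> omega
      · rintro (⟨h1, h2, h3, h4⟩ | ⟨h1, h2⟩)
        · refine ⟨h1, (hmemv x).2 (Or.inl h2), (hmemv y).2 (Or.inl h3), ?_⟩
          rw [idxOf_insert_of_ne hd h2 hxM, idxOf_insert_of_ne hd h3 hyM]
          by_cases hc1 : u.idxOf x < d <;> by_cases hc2 : u.idxOf y < d <;>
            simp [hc1, hc2] <;> omega
        · exact absurd h1 hyM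

theorem exists_split {v : List ℕ} {M : ℕ} (h : M ∈ v) :
    ∃ A B, v = A ++ M :: B ∧ M ∉ A := by
  induction v with
  | nil => simp at h
  | cons a v ih =>
      by_cases ha : a = M
      · subst ha; exact ⟨[], v, rfl, by simp⟩
      · obtain ⟨A, B, rfl, hA⟩ := ih (by
          rcases List.mem_cons.1 h with h' | h'
          · exact absurd h'.symm ha
          · exact h')
        refine ⟨a :: A, B, rfl, ?_⟩
        intro hm
        rcases List.mem_cons.1 hm with h' | h'
        · exact ha h'.symm
        · exact hA h'
theorem isPermWord_erase_top {n : ℕ} {v : List ℕ} (h : IsPermWord (n + 1) v) :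
    IsPermWord n (v.erase (n + 1)) := by
  have : (List.range' 1 (n + 1)).erase (n + 1) = List.range' 1 n := by
    rw [List.range'_concat]
    rw [List.erase_append_right _ (by
      intro hc
      have := List.mem_range'.1 hc
      omega)]
    simp
    omega
  rw [IsPermWord, ← this]
  exact h.erase _

/-- A permutation word is determined by its inversion set. -/
theorem eq_of_invV_eq {n : ℕ} : ∀ {u v : List ℕ}, IsPermWord n u → IsPermWord n v →
    InvV u = InvV v → u = v := by
  induction n with
  | zero =>
      intro u v hu hv _
      rw [List.length_eq_zero_iff.1 hu.length, List.length_eq_zero_iff.1 hv.length]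
  | succ n ih =>
      intro u v hu hv h
      set M := n + 1 with hM
      obtain ⟨A, B, rfl, hA⟩ := exists_split (hu.mem_iff'.2 ⟨by omega, by omega⟩ : M ∈ u)
      obtain ⟨A', B', rfl, hA'⟩ := exists_split (hv.mem_iff'.2 ⟨by omega, by omega⟩ : M ∈ v)
      have hnd : (A ++ M :: B).Nodup := hu.nodup
      have hnd' : (A' ++ M :: B').Nodup := hv.nodup
      have hMB : M ∉ B := by
        rw [List.nodup_append] at hnd
        exact fun hc => (List.nodup_cons.1 hnd.2.1).1 hc
      have hMB' : M ∉ B' := by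
        rw [List.nodup_append] at hnd'
        exact fun hc => (List.nodup_cons.1 hnd'.2.1).1 hc
      have heru : (A ++ M :: B).erase M = A ++ B := by
        rw [List.erase_append_right _ hA, List.erase_cons_head]
      have herv : (A' ++ M :: B').erase M = A' ++ B' := by
        rw [List.erase_append_right _ hA', List.erase_cons_head]
      have hu' : IsPermWord n (A ++ B) := heru ▸ isPermWord_erase_top hu
      have hv' : IsPermWord n (A' ++ B') := herv ▸ isPermWord_erase_top hv
      have hubu : ∀ x ∈ A ++ B, x < M := fun x hx => by
        have := hu'.mem_iff'.1 hx; omega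
      have hubv : ∀ x ∈ A' ++ B', x < M := fun x hx => by
        have := hv'.mem_iff'.1 hx; omega
      have hMu : M ∉ A ++ B := fun hc => by have := hubu M hc; omega
      have hMv : M ∉ A' ++ B' := fun hc => by have := hubv M hc; omega
      have hsplitu : A ++ M :: B = (A ++ B).take A.length ++ M :: (A ++ B).drop A.length := by
        rw [List.take_left, List.drop_left]
      have hsplitv : A' ++ M :: B'
          = (A' ++ B').take A'.length ++ M :: (A' ++ B').drop A'.length := by
        rw [List.take_left, List.drop_left]
      have hIu : InvV (A ++ M :: B) = InvV (A ++ B) ∪ {p | p.2 = M ∧ p.1 ∈ B} := by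
        rw [hsplitu, invV_insert hu'.nodup hMu hubu (by simp), List.drop_left]
      have hIv : InvV (A' ++ M :: B') = InvV (A' ++ B') ∪ {p | p.2 = M ∧ p.1 ∈ B'} := by
        rw [hsplitv, invV_insert hv'.nodup hMv hubv (by simp), List.drop_left]
      rw [hIu, hIv] at h
      -- InvV (A++B) = InvV (A'++B')
      have hInv : InvV (A ++ B) = InvV (A' ++ B') := by
        ext ⟨x, y⟩
        constructor
        · intro hp
          have hyM : y ≠ M := fun e => by
            have := hubu y hp.2.2.1; omega
          have : (x, y) ∈ InvV (A' ++ B') ∪ {p | p.2 = M ∧ p.1 ∈ B'} := by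
            rw [← h]; exact Or.inl hp
          rcases this with h' | h'
          · exact h'
          · exact absurd h'.1 hyM
        · intro hp
          have hyM : y ≠ M := fun e => by
            have := hubv y hp.2.2.1; omega
          have : (x, y) ∈ InvV (A ++ B) ∪ {p | p.2 = M ∧ p.1 ∈ B} := by
            rw [h]; exact Or.inl hp
          rcases this with h' | h'
          · exact h'
          · exact absurd h'.1 hyM
      have hAB : A ++ B = A' ++ B' := ih hu' hv' hInv
      -- B and B' have the same members
      have hBsub : ∀ x, x ∈ B ↔ x ∈ B' := by
        intro x
        constructor
        · intro hx
          have hxM : x < M := hubu x (by simp [hx])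
          have : (x, M) ∈ InvV (A' ++ B') ∪ {p | p.2 = M ∧ p.1 ∈ B'} := by
            rw [← h]; exact Or.inr ⟨rfl, hx⟩
          rcases this with h' | h'
          · exact absurd (hubv M h'.2.2.1) (by omega)
          · exact h'.2
        · intro hx
          have hxM : x < M := hubv x (by simp [hx])
          have : (x, M) ∈ InvV (A ++ B) ∪ {p | p.2 = M ∧ p.1 ∈ B} := by
            rw [h]; exact Or.inr ⟨rfl, hx⟩
          rcases this with h' | h'
          · exact absurd (hubu M h'.2.2.1) (by omega)
          · exact h'.2
      have hndB : B.Nodup := by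
        rw [List.nodup_append] at hnd
        exact (List.nodup_cons.1 hnd.2.1).2
      have hndB' : B'.Nodup := by
        rw [List.nodup_append] at hnd'
        exact (List.nodup_cons.1 hnd'.2.1).2
      have hBlen : B.length = B'.length :=
        (List.perm_of_nodup_nodup_toFinset_eq hndB hndB'
          (by ext x; simpa using hBsub x)).length_eq
      have hABlen : A.length = A'.length := by
        have := congrArg List.length hAB
        simp only [List.length_append] at this
        omega
      obtain ⟨rfl, rfl⟩ := List.append_inj hAB hABlen
      rfl
/-! ### main tree-level equivalences -/

theorem srel_shuffle {T T' : BinaryTree Unit} (h : SRel T T') :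
    IsShuffle (treeWord T) [T.numNodes + 1] (treeWord T') := by
  obtain ⟨j, hj, hw⟩ := srel_word h 1
  have hmid := isShuffle_middle ((postorder (labelFrom T 1).1).take (T.numNodes - j))
    ((postorder (labelFrom T 1).1).drop (T.numNodes - j)) (1 + T.numNodes)
  rw [List.take_append_drop] at hmid
  rw [treeWord, treeWord, hw, show T.numNodes + 1 = 1 + T.numNodes by omega]
  exact hmid

theorem not_mem_treeWord_top (T : BinaryTree Unit) : T.numNodes + 1 ∉ treeWord T := by
  rw [mem_treeWord]; omega

theorem shuffle_srel {T T' : BinaryTree Unit}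
    (h : IsShuffle (treeWord T) [T.numNodes + 1] (treeWord T')) : SRel T T' := by
  set M := T.numNodes + 1 with hMdef
  have hlen : (treeWord T').length = T.numNodes + 1 := by
    rw [h.length, length_treeWord]; simp
  have hT' : T' ≠ BinaryTree.nil := by
    intro e; rw [e] at hlen; simp [treeWord, labelFrom, postorder] at hlen
  have h1 : SRel (delRight T') T' := srel_delRight hT'
  have hnum : T'.numNodes = (delRight T').numNodes + 1 := h1.numNodes
  have hnumT' : T'.numNodes = T.numNodes + 1 := by rw [← length_treeWord T']; exact hlen
  have h2 := srel_shuffle h1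
  rw [show (delRight T').numNodes + 1 = M by omega] at h2
  have e1 : (treeWord T').erase M = treeWord T := h.erase_of_single (not_mem_treeWord_top T)
  have e2 : (treeWord T').erase M = treeWord (delRight T') :=
    h2.erase_of_single (by rw [mem_treeWord]; omega)
  have : treeWord (delRight T') = treeWord T := by rw [← e1, ← e2]
  rw [treeWord_injective this] at h1
  exact h1

theorem key_equiv (T : BinaryTree Unit) (w : List ℕ) (hm : 1 ≤ w.length) :
    (shape (P (invPerm (std (w.take (w.length - 1))))) = T ↔
      SRel T (shape (P (invPerm (std w))))) := by
  have hγ : IsPermWord w.length (invPerm (std w)) := invPerm_std_isPermWord w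
  obtain ⟨A, B, hAB, hA⟩ := exists_split (hγ.mem_iff'.2 ⟨hm, le_refl w.length⟩)
  have hndγ := hγ.nodup
  have hMB : w.length ∉ B := by
    rw [hAB, List.nodup_append] at hndγ
    exact fun hc => (List.nodup_cons.1 hndγ.2.1).1 hc
  have herase : (invPerm (std w)).erase w.length = A ++ B := by
    rw [hAB, List.erase_append_right _ hA, List.erase_cons_head]
  have hσ : invPerm (std (w.take (w.length - 1))) = A ++ B := by
    rw [invPerm_std_take w hm, herase]
  have hbound : ∀ x ∈ A ++ B, x < w.length := by
    intro x hx
    have hxγ : x ∈ invPerm (std w) := by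
      rw [hAB]
      rcases List.mem_append.1 hx with h' | h'
      · exact List.mem_append.2 (Or.inl h')
      · exact List.mem_append.2 (Or.inr (List.mem_cons_of_mem _ h'))
    have hb := hγ.mem_iff'.1 hxγ
    have hxm : x ≠ w.length := by
      rintro rfl
      rcases List.mem_append.1 hx with h' | h'
      · exact hA h'
      · exact hMB h'
    omega
  have hRel : Rel w.length (P (A ++ B)) (P (A ++ w.length :: B)) :=
    rel_P A B (fun x hx => hbound x (List.mem_append.2 (Or.inl hx)))
      (fun x hx => hbound x (List.mem_append.2 (Or.inr hx)))
  have hsrel : SRel (shape (P (A ++ B))) (shape (P (invPerm (std w)))) := by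
    rw [hAB]; exact hRel.srel_shape
  rw [hσ]
  constructor
  · rintro rfl; exact hsrel
  · intro h2
    rw [← hsrel.delRight_eq, h2.delRight_eq]

theorem pel_cond_iff (T : BinaryTree Unit) (w : List ℕ) :
    (∃ σ, IsPermWord w.length σ ∧ shape (P σ) = T ∧ std w = invPerm σ) ↔
      shape (P (invPerm (std w))) = T := by
  constructor
  · rintro ⟨σ, hp, hs, he⟩
    rw [← invPerm_inj hp he]
    exact hs
  · intro hs
    exact ⟨invPerm (std w), invPerm_std_isPermWord w, hs,
      (invPerm_invPerm (std_isPermWord w)).symm⟩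

theorem numNodes_insert (x : ℕ) (t : BinaryTree ℕ) :
    (Sylv.insert x t).numNodes = t.numNodes + 1 := by
  induction t with
  | nil => rfl
  | node a l r ihl ihr =>
      rw [Sylv.insert]
      by_cases h : x ≤ a
      · rw [if_pos h]; simp [BinaryTree.numNodes, ihl]; omega
      · rw [if_neg h]; simp [BinaryTree.numNodes, ihr]; omega

theorem numNodes_P (L : List ℕ) : BinaryTree.numNodes (P L) = L.length := by
  induction L with
  | nil => rfl
  | cons x L ih =>
      show (Sylv.insert x (P L)).numNodes = L.length + 1
      rw [numNodes_insert, ih]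

theorem numNodes_shape (t : BinaryTree ℕ) : (shape t).numNodes = t.numNodes := by
  induction t with
  | nil => rfl
  | node a l r ihl ihr => simp [shape, BinaryTree.numNodes, ihl, ihr]

theorem pel_dot (v : List ℕ) :
    Pel (BinaryTree.node () BinaryTree.nil BinaryTree.nil) v = if v.length = 1 then 1 else 0 := by
  rw [Pel]
  by_cases h : v.length = 1
  · rw [if_pos h, if_pos]
    rw [pel_cond_iff]
    have hp : IsPermWord 1 (invPerm (std v)) := h ▸ invPerm_std_isPermWord v
    have h1 : invPerm (std v) = [1] := by
      have h2 := hp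
      rw [IsPermWord] at h2
      rw [show List.range' 1 1 = [1] from rfl] at h2
      exact List.perm_singleton.1 h2
    rw [h1]
    rfl
  · rw [if_neg h, if_neg]
    rw [pel_cond_iff]
    intro hs
    have h1 : (shape (P (invPerm (std v)))).numNodes = 1 := by rw [hs]; rfl
    rw [numNodes_shape, numNodes_P, (invPerm_std_isPermWord v).length] at h1
    exact h h1
theorem main1 (T : BinaryTree Unit) :
    mulF (Pel T) (Pel (BinaryTree.node () BinaryTree.nil BinaryTree.nil)) =
      ∑ᶠ T' ∈ {T' : BinaryTree Unit |
          IsShuffle (treeWord T) [T.numNodes + 1] (treeWord T')}, Pel T' := by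
  classical
  have hSset : {T' : BinaryTree Unit | IsShuffle (treeWord T) [T.numNodes + 1] (treeWord T')}
      = ↑(graftList T).toFinset := by
    ext T'
    simp only [Set.mem_setOf_eq, Finset.coe_sort_coe, Finset.mem_coe, List.mem_toFinset]
    constructor
    · intro h; exact mem_graftList.2 (shuffle_srel h)
    · intro h; exact srel_shuffle (mem_graftList.1 h)
  rw [hSset, finsum_mem_coe_finset]
  funext w
  rw [Finset.sum_apply]
  have hterm : ∀ T' ∈ (graftList T).toFinset, Pel T' w =
      if shape (P (invPerm (std w))) = T' then (1:ℚ) else 0 := by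
    intro T' _
    rw [Pel]
    by_cases hc : shape (P (invPerm (std w))) = T'
    · rw [if_pos ((pel_cond_iff T' w).2 hc), if_pos hc]
    · rw [if_neg (fun h => hc ((pel_cond_iff T' w).1 h)), if_neg hc]
  rw [Finset.sum_congr rfl hterm, Finset.sum_ite_eq]
  rw [mulF]
  by_cases hm : w.length = 0
  · have hw : w = [] := List.length_eq_zero_iff.1 hm
    subst hw
    have h0 : shape (P (invPerm (std ([] : List ℕ)))) = BinaryTree.nil := rfl
    rw [h0, if_neg (fun h => (mem_graftList.1 (List.mem_toFinset.1 h)).ne_nil rfl)]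
    rw [show ([] : List ℕ).length + 1 = 1 from rfl, Finset.sum_range_one]
    rw [show List.drop 0 ([] : List ℕ) = [] from rfl, pel_dot]
    norm_num
  · have hm1 : 1 ≤ w.length := by omega
    rw [Finset.sum_eq_single_of_mem (w.length - 1) (Finset.mem_range.2 (by omega))
      (fun i hi hne => by
        rw [pel_dot, List.length_drop, if_neg (by
          have := Finset.mem_range.1 hi
          omega)]
        rw [mul_zero])]
    rw [pel_dot, List.length_drop, if_pos (by omega), mul_one]
    rw [Pel]
    by_cases hc : shape (P (invPerm (std w))) ∈ (graftList T).toFinset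
    · rw [if_pos hc, if_pos]
      rw [pel_cond_iff, key_equiv T w hm1]
      exact mem_graftList.1 (List.mem_toFinset.1 hc)
    · rw [if_neg hc, if_neg]
      intro h
      exact hc (List.mem_toFinset.2 (mem_graftList.2
        ((key_equiv T w hm1).1 ((pel_cond_iff T _).1 h))))

theorem invV_treeWord_top (T : BinaryTree Unit) :
    InvV (treeWord (BinaryTree.node () T BinaryTree.nil)) = InvV (treeWord T) := by
  rw [word_top]
  have h : treeWord T ++ [1 + T.numNodes] =
      (treeWord T).take (treeWord T).length ++
        (1 + T.numNodes) :: (treeWord T).drop (treeWord T).length := by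
    rw [List.take_length, List.drop_length]
  rw [h, invV_insert (treeWord_nodup T)
    (fun hc => by have := mem_treeWord.1 hc; omega)
    (fun x hx => by have := mem_treeWord.1 hx; omega) (le_refl _)]
  rw [List.drop_length]
  simp

theorem main2 (T : BinaryTree Unit) :
    ∃ Tmin Tmax : BinaryTree Unit,
      {T' : BinaryTree Unit | IsShuffle (treeWord T) [T.numNodes + 1] (treeWord T')} =
      {T' : BinaryTree Unit | T'.numNodes = T.numNodes + 1 ∧
          weakLe (treeWord Tmin) (treeWord T') ∧
          weakLe (treeWord T') (treeWord Tmax)} := by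
  refine ⟨BinaryTree.node () T BinaryTree.nil, attachRight T, ?_⟩
  set n := T.numNodes with hn
  set u := treeWord T with hu
  have hnd : u.Nodup := treeWord_nodup T
  have hlenu : u.length = n := length_treeWord T
  have hM : (1 + n) ∉ u := fun hc => by have := mem_treeWord.1 hc; omega
  have hub : ∀ x ∈ u, x < 1 + n := fun x hx => by have := mem_treeWord.1 hx; omega
  have hmax : treeWord (attachRight T) =
      u.take (n - rightSpineLen T) ++ (1 + n) :: u.drop (n - rightSpineLen T) :=
    attachRight_word T 1
  have hImax : InvV (treeWord (attachRight T)) =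
      InvV u ∪ {p | p.2 = 1 + n ∧ p.1 ∈ u.drop (n - rightSpineLen T)} := by
    rw [hmax, invV_insert hnd hM hub (by omega)]
  ext T'
  simp only [Set.mem_setOf_eq]
  constructor
  · intro h
    have hsrel := shuffle_srel h
    refine ⟨hsrel.numNodes, ?_, ?_⟩
    · rw [weakLe, invV_treeWord_top]
      obtain ⟨j, hj, hw⟩ := srel_word hsrel 1
      have hw' : treeWord T' = u.take (n - j) ++ (1 + n) :: u.drop (n - j) := hw
      rw [hw', invV_insert hnd hM hub (by omega)]
      exact Set.subset_union_left
    · rw [weakLe, hImax]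
      obtain ⟨j, hj, hw⟩ := srel_word hsrel 1
      have hw' : treeWord T' = u.take (n - j) ++ (1 + n) :: u.drop (n - j) := hw
      rw [hw', invV_insert hnd hM hub (by omega)]
      apply Set.union_subset Set.subset_union_left
      intro p hp
      refine Set.mem_union_right _ ⟨hp.1, ?_⟩
      have hrs := rightSpineLen_le T
      have hdd : n - j = (n - rightSpineLen T) + ((n - j) - (n - rightSpineLen T)) := by
        omega
      rw [hdd, ← List.drop_drop] at hp
      exact List.drop_subset _ _ hp.2
  · rintro ⟨hnum, h1, h2⟩
    set v := treeWord T' with hv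
    have hvperm : IsPermWord (n + 1) v := by
      rw [← hnum]; exact treeWord_perm T'
    have hMv : (n + 1) ∈ v := hvperm.mem_iff'.2 ⟨by omega, le_refl _⟩
    obtain ⟨A, B, hAB, hA⟩ := exists_split hMv
    have hndv := hvperm.nodup
    have hMB : (n + 1) ∉ B := by
      rw [hAB, List.nodup_append] at hndv
      exact fun hc => (List.nodup_cons.1 hndv.2.1).1 hc
    have herase : v.erase (n + 1) = A ++ B := by
      rw [hAB, List.erase_append_right _ hA, List.erase_cons_head]
    have hu' : IsPermWord n (A ++ B) := herase ▸ isPermWord_erase_top hvperm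
    have hbound : ∀ x ∈ A ++ B, x < n + 1 := fun x hx => by
      have := hu'.mem_iff'.1 hx; omega
    have hMu' : (n + 1) ∉ A ++ B := fun hc => by have := hbound _ hc; omega
    have hABsplit : v = (A ++ B).take A.length ++ (n + 1) :: (A ++ B).drop A.length := by
      rw [List.take_left, List.drop_left, hAB]
    have hIv : InvV v = InvV (A ++ B) ∪ {p | p.2 = n + 1 ∧ p.1 ∈ B} := by
      rw [hABsplit, invV_insert hu'.nodup hMu' hbound (by simp), List.drop_left]
    have hImin : InvV (treeWord (BinaryTree.node () T BinaryTree.nil)) = InvV u := invV_treeWord_top T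
    rw [weakLe, hImin] at h1
    rw [weakLe, hImax] at h2
    have hInv : InvV (A ++ B) = InvV u := by
      ext ⟨x, y⟩
      constructor
      · intro hp
        have hy : y < n + 1 := hbound y hp.2.2.1
        have : (x, y) ∈ InvV u ∪ {p | p.2 = 1 + n ∧ p.1 ∈ u.drop (n - rightSpineLen T)} :=
          h2 (by rw [hIv]; exact Or.inl hp)
        rcases this with h' | h'
        · exact h'
        · exact absurd h'.1 (by omega)
      · intro hp
        have hy : y < 1 + n := hub y hp.2.2.1
        have : (x, y) ∈ InvV (A ++ B) ∪ {p | p.2 = n + 1 ∧ p.1 ∈ B} := by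
          rw [← hIv]; exact h1 hp
        rcases this with h' | h'
        · exact h'
        · exact absurd h'.1 (by omega)
    have hABu : A ++ B = u := eq_of_invV_eq hu' (show IsPermWord n u from treeWord_perm T) hInv
    rw [hAB, ← hABu]
    exact isShuffle_middle A B (n + 1)

end Sylv


/-- `P_T · P_•` is the multiplicity-free sum of `P_{T'}` over the trees `T'`
with `n+1` nodes whose tree-word appears in `w_T ⧢ (n+1)`, and this set of trees is an
interval of the Tamari/Loday–Ronco order (the weak order restricted to tree-words). -/
theorem stmt18 (T : Tree Unit) :
    (Sylv.mulF (Sylv.Pel T) (Sylv.Pel (Tree.node () Tree.nil Tree.nil)) =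
      ∑ᶠ T' ∈ {T' : Tree Unit |
          Sylv.IsShuffle (Sylv.treeWord T) [T.numNodes + 1] (Sylv.treeWord T')},
        Sylv.Pel T') ∧
    ∃ Tmin Tmax : Tree Unit,
      {T' : Tree Unit | Sylv.IsShuffle (Sylv.treeWord T) [T.numNodes + 1] (Sylv.treeWord T')} =
      {T' : Tree Unit | T'.numNodes = T.numNodes + 1 ∧
          Sylv.weakLe (Sylv.treeWord Tmin) (Sylv.treeWord T') ∧
          Sylv.weakLe (Sylv.treeWord T') (Sylv.treeWord Tmax)} := ⟨Sylv.main1 T, Sylv.main2 T⟩
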